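/- Let γ be a private bit in X-form with shield dimension d (X an operator on ℂ^d ⊗ ℂ^d with ‖X‖₁ = 1), and suppose the logarithmic negativity satisfies E_N(γ) = log₂ ‖γ^Γ‖₁ ≤ ε. Then ‖X^Γ‖₁ ≤ 2^ε − 1, and since ‖X^Γ‖₁ ≥ ‖X‖₁/d = 1/d (the diamond/operator bound on the transpose map), the shield dimension satisfies d ≥ 1/(2^ε − 1). -/

import Mathlib

open scoped ComplexOrder

/-- The positive semidefinite square root (Mathlib's former `Matrix.PosSemidef.sqrt`). -/
noncomputable def Matrix.PosSemidef.sqrt {n : Type*} [Fintype n] [DecidableEq n] {A : Matrix n n ℂ}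
    (hA : A.PosSemidef) : Matrix n n ℂ :=
  hA.1.eigenvectorUnitary.1 * Matrix.diagonal (fun i => ((Real.sqrt (hA.1.eigenvalues i) : ℝ) : ℂ)) *
    (star hA.1.eigenvectorUnitary : Matrix n n ℂ)

/-- Trace norm `‖A‖₁ = tr √(AᴴA)`. -/
noncomputable def traceNorm {n : Type*} [Fintype n] [DecidableEq n] (A : Matrix n n ℂ) : ℝ :=
  ((Matrix.PosSemidef.sqrt (Matrix.posSemidef_conjTranspose_mul_self A)).trace).re

/-- Partial transpose on the second tensor factor. -/
def pt {α β : Type*} (M : Matrix (α × β) (α × β) ℂ) : Matrix (α × β) (α × β) ℂ :=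
  fun p q => M (p.1, q.2) (q.1, p.2)

/-- The private bit in X-form, grouped as `(A × A') × (B × B')`. -/
noncomputable def gammaBit {d : ℕ} (X : Matrix (Fin d × Fin d) (Fin d × Fin d) ℂ) :
    Matrix ((Fin 2 × Fin d) × (Fin 2 × Fin d)) ((Fin 2 × Fin d) × (Fin 2 × Fin d)) ℂ :=
  fun p q =>
    (1 / 2 : ℂ) *
      (if p.1.1 = 0 ∧ p.2.1 = 0 ∧ q.1.1 = 0 ∧ q.2.1 = 0 then
          (Matrix.PosSemidef.sqrt (Matrix.posSemidef_self_mul_conjTranspose X)) (p.1.2, p.2.2) (q.1.2, q.2.2)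
        else if p.1.1 = 0 ∧ p.2.1 = 0 ∧ q.1.1 = 1 ∧ q.2.1 = 1 then
          X (p.1.2, p.2.2) (q.1.2, q.2.2)
        else if p.1.1 = 1 ∧ p.2.1 = 1 ∧ q.1.1 = 0 ∧ q.2.1 = 0 then
          (Matrix.conjTranspose X) (p.1.2, p.2.2) (q.1.2, q.2.2)
        else if p.1.1 = 1 ∧ p.2.1 = 1 ∧ q.1.1 = 1 ∧ q.2.1 = 1 then
          (Matrix.PosSemidef.sqrt (Matrix.posSemidef_conjTranspose_mul_self X)) (p.1.2, p.2.2) (q.1.2, q.2.2)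
        else 0)

section Helpers

open Matrix

variable {n m : Type*} [Fintype n] [DecidableEq n] [Fintype m] [DecidableEq m]

section sqrtPort
open scoped MatrixOrder

lemma Matrix.PosSemidef.sqrt_eq_cfc {A : Matrix n n ℂ} (hA : A.PosSemidef) :
    hA.sqrt = CFC.sqrt A := by
  rw [CFC.sqrt_eq_cfc, cfc_nnreal_eq_real _ A, hA.1.cfc_eq, Matrix.IsHermitian.cfc,
    Unitary.conjStarAlgAut_apply, Matrix.PosSemidef.sqrt]
  congr 2
  refine congrArg Matrix.diagonal ?_
  funext i
  simp [Real.coe_sqrt, hA.eigenvalues_nonneg i]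

lemma Matrix.PosSemidef.posSemidef_sqrt {A : Matrix n n ℂ} (hA : A.PosSemidef) :
    hA.sqrt.PosSemidef := by
  rw [hA.sqrt_eq_cfc]; exact (CFC.sqrt_nonneg A).posSemidef

@[simp] lemma Matrix.PosSemidef.sqrt_mul_self {A : Matrix n n ℂ} (hA : A.PosSemidef) :
    hA.sqrt * hA.sqrt = A := by
  rw [hA.sqrt_eq_cfc]; exact CFC.sqrt_mul_sqrt_self A hA.nonneg

lemma Matrix.PosSemidef.eq_sqrt_of_sq_eq {A B : Matrix n n ℂ} (hB : B.PosSemidef)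
    (hA : A.PosSemidef) (h : B ^ 2 = A) : B = hA.sqrt := by
  rw [hA.sqrt_eq_cfc]
  exact ((CFC.sqrt_eq_iff A B hA.nonneg hB.nonneg).mpr (by rw [← sq]; exact h)).symm

lemma Matrix.posSemidef_iff_eq_transpose_mul_self {A : Matrix n n ℂ} :
    A.PosSemidef ↔ ∃ B : Matrix n n ℂ, A = Bᴴ * B := by
  constructor
  · intro hA
    exact ⟨hA.sqrt, by rw [hA.posSemidef_sqrt.1.eq, hA.sqrt_mul_self]⟩
  · rintro ⟨B, rfl⟩
    exact Matrix.posSemidef_conjTranspose_mul_self B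

end sqrtPort

lemma sqrt_congr {A B : Matrix n n ℂ} (h : A = B) (hA : A.PosSemidef) (hB : B.PosSemidef) :
    hA.sqrt = hB.sqrt := by subst h; rfl

lemma trace_conj_diag (U : Matrix n n ℂ) (hU : U ∈ Matrix.unitaryGroup n ℂ) (v : n → ℂ) :
    (U * Matrix.diagonal v * star U).trace = ∑ i, v i := by
  rw [Matrix.trace_mul_cycle, Matrix.mem_unitaryGroup_iff'.mp hU, Matrix.one_mul,
    Matrix.trace_diagonal]

lemma trace_sqrt_eq {A : Matrix n n ℂ} (hA : A.PosSemidef) :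
    hA.sqrt.trace = ((∑ i, Real.sqrt (hA.1.eigenvalues i) : ℝ) : ℂ) := by
  rw [Matrix.PosSemidef.sqrt, trace_conj_diag _ (hA.1.eigenvectorUnitary).2]
  push_cast
  rfl

lemma traceNorm_eq (A : Matrix n n ℂ) :
    traceNorm A = ∑ i, Real.sqrt ((Matrix.posSemidef_conjTranspose_mul_self A).1.eigenvalues i) := by
  rw [traceNorm, trace_sqrt_eq, Complex.ofReal_re]

lemma traceNorm_nonneg (A : Matrix n n ℂ) : 0 ≤ traceNorm A := by
  rw [traceNorm_eq]; exact Finset.sum_nonneg fun i _ => Real.sqrt_nonneg _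

-- spectral: real part of trace of hermitian = sum of eigenvalues
lemma retrace_eq_sum_eigenvalues {H : Matrix n n ℂ} (hH : H.IsHermitian) :
    H.trace.re = ∑ i, hH.eigenvalues i := by
  conv_lhs => rw [hH.spectral_theorem, Unitary.conjStarAlgAut_apply]
  rw [trace_conj_diag _ (hH.eigenvectorUnitary).2]
  have : (∑ i, ((RCLike.ofReal ∘ hH.eigenvalues) i : ℂ)) = ((∑ i, hH.eigenvalues i : ℝ) : ℂ) := by
    push_cast; rfl
  rw [this, Complex.ofReal_re]

lemma conj_diag_mul (U : Matrix n n ℂ) (hU : U ∈ Matrix.unitaryGroup n ℂ) (v w : n → ℂ) :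
    (U * Matrix.diagonal v * star U) * (U * Matrix.diagonal w * star U)
      = U * Matrix.diagonal (v * w) * star U := by
  have h1 : star U * U = 1 := Matrix.mem_unitaryGroup_iff'.mp hU
  have h2 : (U * Matrix.diagonal v * star U) * (U * Matrix.diagonal w * star U)
      = U * (Matrix.diagonal v * ((star U * U) * (Matrix.diagonal w * star U))) := by
    simp only [Matrix.mul_assoc]
  rw [h2, h1, Matrix.one_mul, ← Matrix.mul_assoc (Matrix.diagonal v),
    Matrix.diagonal_mul_diagonal, Matrix.mul_assoc]
  rfl

lemma conj_diag_psd (U : Matrix n n ℂ) (v : n → ℝ) (hv : ∀ i, 0 ≤ v i) :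
    (U * Matrix.diagonal (fun i => (v i : ℂ)) * star U).PosSemidef := by
  have : (Matrix.diagonal (fun i => (v i : ℂ))).PosSemidef :=
    Matrix.PosSemidef.diagonal fun i => by simpa using Complex.zero_le_real.mpr (hv i)
  simpa [Matrix.star_eq_conjTranspose] using this.mul_mul_conjTranspose_same U

lemma traceNorm_hermitian {H : Matrix n n ℂ} (hH : H.IsHermitian) :
    traceNorm H = ∑ i, |hH.eigenvalues i| := by
  set U : Matrix n n ℂ := (hH.eigenvectorUnitary : Matrix n n ℂ)
  have hU : U ∈ Matrix.unitaryGroup n ℂ := hH.eigenvectorUnitary.2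
  set S : Matrix n n ℂ := U * Matrix.diagonal (fun i => ((|hH.eigenvalues i| : ℝ) : ℂ)) * star U with hSdef
  have hSpsd : S.PosSemidef := conj_diag_psd U _ fun i => abs_nonneg _
  have hspec : H = U * Matrix.diagonal (fun i => (hH.eigenvalues i : ℂ)) * star U := by
    simpa [Function.comp_def, Unitary.conjStarAlgAut_apply] using hH.spectral_theorem
  have hsq : S ^ 2 = Hᴴ * H := by
    rw [pow_two, hSdef, conj_diag_mul U hU, hH.eq]
    conv_rhs => rw [hspec, conj_diag_mul U hU]
    congr 2
    funext i j
    simp only [Matrix.diagonal_apply, Pi.mul_apply, ← Complex.ofReal_mul, abs_mul_abs_self]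
  have := hSpsd.eq_sqrt_of_sq_eq (Matrix.posSemidef_conjTranspose_mul_self H) hsq
  rw [traceNorm, ← this, hSdef, trace_conj_diag U hU]
  have : (∑ i, ((|hH.eigenvalues i| : ℝ) : ℂ)) = ((∑ i, |hH.eigenvalues i| : ℝ) : ℂ) := by push_cast; rfl
  rw [this, Complex.ofReal_re]

lemma retrace_le_traceNorm {H : Matrix n n ℂ} (hH : H.IsHermitian) :
    H.trace.re ≤ traceNorm H := by
  rw [retrace_eq_sum_eigenvalues hH, traceNorm_hermitian hH]
  exact Finset.sum_le_sum fun i _ => le_abs_self _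

lemma traceNorm_conjTranspose (A : Matrix n n ℂ) : traceNorm Aᴴ = traceNorm A := by
  set hAA := Matrix.posSemidef_conjTranspose_mul_self A with hAAdef
  set eig : n → ℝ := hAA.1.eigenvalues with heig
  set U : Matrix n n ℂ := (hAA.1.eigenvectorUnitary : Matrix n n ℂ) with hUdef
  have hU : U ∈ Matrix.unitaryGroup n ℂ := hAA.1.eigenvectorUnitary.2
  have hU1 : star U * U = 1 := Matrix.mem_unitaryGroup_iff'.mp hU
  have hU2 : U * star U = 1 := Matrix.mem_unitaryGroup_iff.mp hU
  have heignn : ∀ i, 0 ≤ eig i := hAA.eigenvalues_nonneg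
  set B : Matrix n n ℂ := A * U with hBdef
  set f : n → ℝ := fun i => if 0 < eig i then (Real.sqrt (eig i))⁻¹ else 0 with hf
  have hfnn : ∀ i, 0 ≤ f i := by
    intro i; rw [hf]; dsimp only
    split
    · exact inv_nonneg.mpr (Real.sqrt_nonneg _)
    · exact le_refl _
  set S : Matrix n n ℂ := B * Matrix.diagonal (fun i => (f i : ℂ)) * Bᴴ with hSdef
  have hspec : Aᴴ * A = U * Matrix.diagonal (fun i => (eig i : ℂ)) * star U := by
    simpa [Function.comp_def, Unitary.conjStarAlgAut_apply] using hAA.1.spectral_theorem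
  have hBB : Bᴴ * B = Matrix.diagonal (fun i => (eig i : ℂ)) := by
    rw [hBdef, Matrix.conjTranspose_mul, ← Matrix.star_eq_conjTranspose A]
    rw [Matrix.star_eq_conjTranspose]
    calc Uᴴ * Aᴴ * (A * U) = Uᴴ * (Aᴴ * A) * U := by simp only [Matrix.mul_assoc]
      _ = (star U * U) * Matrix.diagonal (fun i => (eig i : ℂ)) * (star U * U) := by
          rw [hspec, Matrix.star_eq_conjTranspose]; simp only [Matrix.mul_assoc]
      _ = Matrix.diagonal (fun i => (eig i : ℂ)) := by rw [hU1]; simp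
  have hBzero : ∀ i, eig i = 0 → ∀ k, B k i = 0 := by
    intro i hi k
    have h1 : (Bᴴ * B) i i = ((eig i : ℝ) : ℂ) := by rw [hBB, Matrix.diagonal_apply_eq]
    have h2 : (Bᴴ * B) i i = ∑ k, ((Complex.normSq (B k i) : ℝ) : ℂ) := by
      simp only [Matrix.mul_apply, Matrix.conjTranspose_apply]
      exact Finset.sum_congr rfl fun k _ => (Complex.normSq_eq_conj_mul_self).symm ▸ rfl
    have h3 : (∑ k, Complex.normSq (B k i)) = 0 := by
      have := h1.symm.trans h2
      rw [hi] at this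
      have := congrArg Complex.re this
      simpa using this.symm
    have h4 : Complex.normSq (B k i) = 0 := by
      have := (Finset.sum_eq_zero_iff_of_nonneg (fun j _ => Complex.normSq_nonneg (B j i))).mp h3
      exact this k (Finset.mem_univ k)
    exact Complex.normSq_eq_zero.mp h4
  have hBdiag : B * Matrix.diagonal (fun i => ((f i * eig i * f i : ℝ) : ℂ)) = B := by
    ext k i
    rw [Matrix.mul_diagonal]
    rcases lt_or_eq_of_le (heignn i) with hpos | hzero
    · have hs : Real.sqrt (eig i) ≠ 0 := by positivity
      have : f i * eig i * f i = 1 := by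
        rw [hf]; dsimp only; rw [if_pos hpos]
        field_simp
        exact (Real.sq_sqrt (heignn i)).symm
      rw [this]; simp
    · rw [hBzero i hzero.symm k]; simp
  have hS2 : S ^ 2 = A * Aᴴ := by
    have e1 : S ^ 2 = B * (Matrix.diagonal (fun i => (f i : ℂ)) * (Bᴴ * B) *
        Matrix.diagonal (fun i => (f i : ℂ))) * Bᴴ := by
      rw [pow_two, hSdef]; simp only [Matrix.mul_assoc]
    rw [e1, hBB, Matrix.diagonal_mul_diagonal, Matrix.diagonal_mul_diagonal]
    have e2 : B * Matrix.diagonal (fun i => (f i : ℂ) * (eig i : ℂ) * (f i : ℂ)) = B := by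
      have : (fun i => (f i : ℂ) * (eig i : ℂ) * (f i : ℂ))
          = fun i => ((f i * eig i * f i : ℝ) : ℂ) := by
        funext i; push_cast; ring
      rw [this, hBdiag]
    rw [e2, hBdef]
    rw [Matrix.conjTranspose_mul]
    calc A * U * (Uᴴ * Aᴴ) = A * (U * star U) * Aᴴ := by
          rw [Matrix.star_eq_conjTranspose]; simp only [Matrix.mul_assoc]
      _ = A * Aᴴ := by rw [hU2]; simp [Matrix.mul_assoc]
  have hSpsd : S.PosSemidef := by
    have : (Matrix.diagonal (fun i => (f i : ℂ))).PosSemidef :=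
      Matrix.PosSemidef.diagonal fun i => by simpa using Complex.zero_le_real.mpr (hfnn i)
    exact this.mul_mul_conjTranspose_same B
  have hsq' : S ^ 2 = Aᴴᴴ * Aᴴ := by rw [Matrix.conjTranspose_conjTranspose]; exact hS2
  have hSsqrt := hSpsd.eq_sqrt_of_sq_eq (Matrix.posSemidef_conjTranspose_mul_self Aᴴ) hsq'
  have htr : traceNorm Aᴴ = S.trace.re := by rw [traceNorm, ← hSsqrt]
  rw [htr, hSdef]
  rw [Matrix.trace_mul_cycle, hBB, Matrix.diagonal_mul_diagonal]
  have : Matrix.trace (Matrix.diagonal (fun i => (eig i : ℂ) * (f i : ℂ)))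
      = ((∑ i, Real.sqrt (eig i) : ℝ) : ℂ) := by
    rw [Matrix.trace_diagonal]
    have hr : ∀ i, eig i * f i = Real.sqrt (eig i) := by
      intro i
      rw [hf]; dsimp only
      rcases lt_or_eq_of_le (heignn i) with hpos | hzero
      · rw [if_pos hpos, ← div_eq_mul_inv, Real.div_sqrt]
      · rw [← hzero]; simp
    calc ∑ i, (eig i : ℂ) * (f i : ℂ) = ∑ i, ((Real.sqrt (eig i) : ℝ) : ℂ) :=
          Finset.sum_congr rfl fun i _ => by rw [← hr i]; push_cast; ring
      _ = _ := by push_cast; rfl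
  rw [this, Complex.ofReal_re, traceNorm_eq]

lemma retrace_AHA (A : Matrix n n ℂ) :
    (Aᴴ * A).trace.re = ∑ q, ∑ p, Complex.normSq (A p q) := by
  rw [Matrix.trace]
  have : ∀ q, (Aᴴ * A).diag q = ((∑ p, Complex.normSq (A p q) : ℝ) : ℂ) := by
    intro q
    simp only [Matrix.diag_apply, Matrix.mul_apply, Matrix.conjTranspose_apply]
    push_cast
    exact Finset.sum_congr rfl fun p _ => by rw [Complex.star_def, ← Complex.normSq_eq_conj_mul_self]
  rw [Finset.sum_congr rfl fun q _ => this q]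
  push_cast
  rw [Complex.re_sum]
  simp

lemma frob_le_traceNorm (A : Matrix n n ℂ) :
    Real.sqrt ((Aᴴ * A).trace.re) ≤ traceNorm A := by
  set hAA := Matrix.posSemidef_conjTranspose_mul_self A
  have h1 : (Aᴴ * A).trace.re = ∑ i, hAA.1.eigenvalues i := retrace_eq_sum_eigenvalues hAA.1
  have h2 : ∑ i, hAA.1.eigenvalues i ≤ (∑ i, Real.sqrt (hAA.1.eigenvalues i)) ^ 2 := by
    have := Finset.sum_sq_le_sq_sum_of_nonneg
      (f := fun i => Real.sqrt (hAA.1.eigenvalues i)) (s := Finset.univ)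
      (fun i _ => Real.sqrt_nonneg _)
    calc ∑ i, hAA.1.eigenvalues i = ∑ i, (Real.sqrt (hAA.1.eigenvalues i)) ^ 2 :=
          Finset.sum_congr rfl fun i _ => (Real.sq_sqrt (hAA.eigenvalues_nonneg i)).symm
      _ ≤ _ := this
  rw [h1, traceNorm_eq]
  calc Real.sqrt (∑ i, hAA.1.eigenvalues i)
      ≤ Real.sqrt ((∑ i, Real.sqrt (hAA.1.eigenvalues i)) ^ 2) := Real.sqrt_le_sqrt h2
    _ = ∑ i, Real.sqrt (hAA.1.eigenvalues i) := by
        rw [Real.sqrt_sq (Finset.sum_nonneg fun i _ => Real.sqrt_nonneg _)]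

lemma traceNorm_le_frob (A : Matrix n n ℂ) :
    traceNorm A ≤ Real.sqrt (Fintype.card n) * Real.sqrt ((Aᴴ * A).trace.re) := by
  set hAA := Matrix.posSemidef_conjTranspose_mul_self A
  have h1 : (Aᴴ * A).trace.re = ∑ i, hAA.1.eigenvalues i := retrace_eq_sum_eigenvalues hAA.1
  have h2 : (∑ i, Real.sqrt (hAA.1.eigenvalues i)) ^ 2
      ≤ (Fintype.card n : ℝ) * ∑ i, hAA.1.eigenvalues i := by
    have := sq_sum_le_card_mul_sum_sq (s := Finset.univ)
      (f := fun i => Real.sqrt (hAA.1.eigenvalues i))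
    simpa [Real.sq_sqrt, Finset.sum_congr rfl fun i (_ : i ∈ Finset.univ) =>
      Real.sq_sqrt (hAA.eigenvalues_nonneg i)] using this
  rw [traceNorm_eq, h1]
  have h3 : ∑ i, Real.sqrt (hAA.1.eigenvalues i)
      = Real.sqrt ((∑ i, Real.sqrt (hAA.1.eigenvalues i)) ^ 2) := by
    rw [Real.sqrt_sq (Finset.sum_nonneg fun i _ => Real.sqrt_nonneg _)]
  rw [h3, ← Real.sqrt_mul (by positivity)]
  exact Real.sqrt_le_sqrt h2

lemma psd_fromBlocks {P : Matrix n n ℂ} {Q : Matrix m m ℂ} (hP : P.PosSemidef) (hQ : Q.PosSemidef) :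
    (Matrix.fromBlocks P 0 0 Q).PosSemidef := by
  obtain ⟨B₁, rfl⟩ := Matrix.posSemidef_iff_eq_transpose_mul_self.mp hP
  obtain ⟨B₂, rfl⟩ := Matrix.posSemidef_iff_eq_transpose_mul_self.mp hQ
  refine Matrix.posSemidef_iff_eq_transpose_mul_self.mpr ⟨Matrix.fromBlocks B₁ 0 0 B₂, ?_⟩
  rw [Matrix.fromBlocks_conjTranspose, Matrix.fromBlocks_multiply]
  simp

lemma trace_fromBlocks (A : Matrix n n ℂ) (B : Matrix n m ℂ) (C : Matrix m n ℂ)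
    (D : Matrix m m ℂ) : (Matrix.fromBlocks A B C D).trace = A.trace + D.trace := by
  simp [Matrix.trace, Fintype.sum_sum_type]

lemma traceNorm_fromBlocks_diag (A : Matrix n n ℂ) (D : Matrix m m ℂ) :
    traceNorm (Matrix.fromBlocks A 0 0 D) = traceNorm A + traceNorm D := by
  set M := Matrix.fromBlocks A 0 0 D with hM
  have hA' := Matrix.posSemidef_conjTranspose_mul_self A
  have hD' := Matrix.posSemidef_conjTranspose_mul_self D
  set S := Matrix.fromBlocks hA'.sqrt 0 0 hD'.sqrt with hS
  have hSpsd : S.PosSemidef := psd_fromBlocks hA'.posSemidef_sqrt hD'.posSemidef_sqrt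
  have hsq : S ^ 2 = Mᴴ * M := by
    rw [pow_two, hS, hM, Matrix.fromBlocks_conjTranspose, Matrix.fromBlocks_multiply,
      Matrix.fromBlocks_multiply]
    simp [Matrix.PosSemidef.sqrt_mul_self]
  have := hSpsd.eq_sqrt_of_sq_eq (Matrix.posSemidef_conjTranspose_mul_self M) hsq
  rw [traceNorm, ← this, hS, trace_fromBlocks, Complex.add_re, traceNorm, traceNorm]

lemma traceNorm_fromBlocks_offdiag (B C : Matrix n n ℂ) :
    traceNorm (Matrix.fromBlocks 0 B C 0) = traceNorm C + traceNorm B := by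
  set M := Matrix.fromBlocks (0 : Matrix n n ℂ) B C 0 with hM
  have hB' := Matrix.posSemidef_conjTranspose_mul_self B
  have hC' := Matrix.posSemidef_conjTranspose_mul_self C
  set S := Matrix.fromBlocks hC'.sqrt 0 0 hB'.sqrt with hS
  have hSpsd : S.PosSemidef := psd_fromBlocks hC'.posSemidef_sqrt hB'.posSemidef_sqrt
  have hsq : S ^ 2 = Mᴴ * M := by
    rw [pow_two, hS, hM, Matrix.fromBlocks_conjTranspose, Matrix.fromBlocks_multiply,
      Matrix.fromBlocks_multiply]
    simp [Matrix.PosSemidef.sqrt_mul_self]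
  have := hSpsd.eq_sqrt_of_sq_eq (Matrix.posSemidef_conjTranspose_mul_self M) hsq
  rw [traceNorm, ← this, hS, trace_fromBlocks, Complex.add_re, traceNorm, traceNorm]

lemma traceNorm_submatrix {A : Matrix n n ℂ} (e : m ≃ n) :
    traceNorm (A.submatrix e e) = traceNorm A := by
  have hAA := Matrix.posSemidef_conjTranspose_mul_self A
  set S := hAA.sqrt.submatrix e e with hS
  have hSpsd : S.PosSemidef := hAA.posSemidef_sqrt.submatrix e
  have hsub : (A.submatrix e e)ᴴ * (A.submatrix e e) = (Aᴴ * A).submatrix e e := by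
    rw [Matrix.conjTranspose_submatrix, Matrix.submatrix_mul_equiv]
  have hsq : S ^ 2 = (A.submatrix e e)ᴴ * (A.submatrix e e) := by
    rw [hsub, pow_two, hS, Matrix.submatrix_mul_equiv, hAA.sqrt_mul_self]
  have := hSpsd.eq_sqrt_of_sq_eq (Matrix.posSemidef_conjTranspose_mul_self (A.submatrix e e)) hsq
  rw [traceNorm, ← this, hS]
  have htr : (hAA.sqrt.submatrix e e).trace = hAA.sqrt.trace := by
    rw [Matrix.trace, Matrix.trace]
    exact Fintype.sum_equiv e _ _ fun i => rfl
  rw [htr]; rfl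

lemma traceNorm_real_smul {r : ℝ} (hr : 0 ≤ r) (A : Matrix n n ℂ) :
    traceNorm (((r : ℝ) : ℂ) • A) = r * traceNorm A := by
  have hAA := Matrix.posSemidef_conjTranspose_mul_self A
  set S := ((r : ℝ) : ℂ) • hAA.sqrt with hS
  have hSpsd : S.PosSemidef := by
    obtain ⟨B, hB⟩ := Matrix.posSemidef_iff_eq_transpose_mul_self.mp hAA.posSemidef_sqrt
    refine Matrix.posSemidef_iff_eq_transpose_mul_self.mpr
      ⟨((Real.sqrt r : ℝ) : ℂ) • B, ?_⟩
    rw [Matrix.conjTranspose_smul, Matrix.smul_mul, Matrix.mul_smul, hS, hB, smul_smul]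
    congr 1
    rw [Complex.star_def, Complex.conj_ofReal, ← Complex.ofReal_mul,
      Real.mul_self_sqrt hr]
  have hsm : (((r:ℝ):ℂ) • A)ᴴ * (((r:ℝ):ℂ) • A) = (((r*r : ℝ):ℂ)) • (Aᴴ * A) := by
    rw [Matrix.conjTranspose_smul, Matrix.smul_mul, Matrix.mul_smul, smul_smul,
      Complex.star_def, Complex.conj_ofReal, Complex.ofReal_mul]
  have hsq : S ^ 2 = (((r:ℝ):ℂ) • A)ᴴ * (((r:ℝ):ℂ) • A) := by
    rw [hsm, pow_two, hS, Matrix.smul_mul, Matrix.mul_smul, smul_smul, hAA.sqrt_mul_self,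
      Complex.ofReal_mul]
  have := hSpsd.eq_sqrt_of_sq_eq (Matrix.posSemidef_conjTranspose_mul_self (((r:ℝ):ℂ) • A)) hsq
  rw [traceNorm, ← this, hS, Matrix.trace_smul]
  simp [traceNorm, Complex.smul_re]

section pt
variable {α β : Type*} [Fintype α] [Fintype β] [DecidableEq α] [DecidableEq β]

lemma pt_trace (M : Matrix (α × β) (α × β) ℂ) : (pt M).trace = M.trace := by
  rw [Matrix.trace, Matrix.trace]
  exact Finset.sum_congr rfl fun p _ => rfl

lemma pt_conjTranspose (M : Matrix (α × β) (α × β) ℂ) : pt (Mᴴ) = (pt M)ᴴ := by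
  ext p q
  simp [pt, Matrix.conjTranspose_apply]

lemma pt_isHermitian {M : Matrix (α × β) (α × β) ℂ} (hM : M.IsHermitian) :
    (pt M).IsHermitian := by
  rw [Matrix.IsHermitian, ← pt_conjTranspose, hM.eq]

lemma pt_frob (M : Matrix (α × β) (α × β) ℂ) :
    ((pt M)ᴴ * pt M).trace.re = (Mᴴ * M).trace.re := by
  rw [retrace_AHA, retrace_AHA]
  rw [← Finset.sum_product', ← Finset.sum_product']
  let e : ((α × β) × (α × β)) ≃ ((α × β) × (α × β)) :=
    ⟨fun x => ((x.1.1, x.2.2), (x.2.1, x.1.2)), fun x => ((x.1.1, x.2.2), (x.2.1, x.1.2)),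
      fun x => rfl, fun x => rfl⟩
  refine (Fintype.sum_equiv e _ _ fun x => ?_).symm
  simp only [pt, e, Equiv.coe_fn_mk]

end pt

section main
variable {d : ℕ}

abbrev dd (d : ℕ) := Fin d × Fin d

def keyEquiv (d : ℕ) : ((dd d ⊕ dd d) ⊕ (dd d ⊕ dd d)) ≃ ((Fin 2 × Fin d) × (Fin 2 × Fin d)) where
  toFun x := match x with
    | Sum.inl (Sum.inl (a, b)) => ((0, a), (0, b))
    | Sum.inl (Sum.inr (a, b)) => ((1, a), (1, b))
    | Sum.inr (Sum.inl (a, b)) => ((0, a), (1, b))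
    | Sum.inr (Sum.inr (a, b)) => ((1, a), (0, b))
  invFun p :=
    if p.1.1 = 0 then
      (if p.2.1 = 0 then Sum.inl (Sum.inl (p.1.2, p.2.2)) else Sum.inr (Sum.inl (p.1.2, p.2.2)))
    else
      (if p.2.1 = 0 then Sum.inr (Sum.inr (p.1.2, p.2.2)) else Sum.inl (Sum.inr (p.1.2, p.2.2)))
  left_inv x := by
    rcases x with (⟨a, b⟩ | ⟨a, b⟩) | (⟨a, b⟩ | ⟨a, b⟩) <;> simp
  right_inv p := by
    obtain ⟨⟨a, x⟩, ⟨b, y⟩⟩ := p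
    fin_cases a <;> fin_cases b <;> simp

lemma gamma_decomp (X : Matrix (dd d) (dd d) ℂ) :
    (pt (gammaBit X)).submatrix (keyEquiv d) (keyEquiv d)
      = ((1/2 : ℝ) : ℂ) • Matrix.fromBlocks
          (Matrix.fromBlocks (pt (Matrix.posSemidef_self_mul_conjTranspose X).sqrt) 0 0
            (pt (Matrix.posSemidef_conjTranspose_mul_self X).sqrt))
          0 0
          (Matrix.fromBlocks 0 (pt X) (pt Xᴴ) 0) := by
  ext p q
  rcases p with (⟨x, y⟩ | ⟨x, y⟩) | (⟨x, y⟩ | ⟨x, y⟩) <;>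
    rcases q with (⟨u, v⟩ | ⟨u, v⟩) | (⟨u, v⟩ | ⟨u, v⟩) <;>
      simp [pt, gammaBit, keyEquiv, Matrix.smul_apply, Fin.ext_iff, -Fin.val_eq_zero_iff] <;> norm_num

end main


end Helpers

open Matrix

/-- if a private bit `γ` in X-form with shield dimension `d` has
logarithmic negativity `E_N(γ) = log₂‖γ^Γ‖₁ ≤ ε`, then `‖X^Γ‖₁ ≤ 2^ε - 1` and
`d ≥ 1/(2^ε - 1)`. -/
theorem stmt18 (d : ℕ) (hd : 0 < d)
    (X : Matrix (Fin d × Fin d) (Fin d × Fin d) ℂ) (hX : traceNorm X = 1)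
    (ε : ℝ) (hε : 0 < ε)
    (hEN : Real.logb 2 (traceNorm (pt (gammaBit X))) ≤ ε) :
    traceNorm (pt X) ≤ (2 : ℝ) ^ ε - 1 ∧ 1 / ((2 : ℝ) ^ ε - 1) ≤ (d : ℝ) := by
  set P0 := (Matrix.posSemidef_self_mul_conjTranspose X).sqrt with hP0
  set P1 := (Matrix.posSemidef_conjTranspose_mul_self X).sqrt with hP1
  -- decomposition of the trace norm of pt gammaBit
  have h0 : traceNorm (pt (gammaBit X))
      = (1/2 : ℝ) * ((traceNorm (pt P0) + traceNorm (pt P1))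
        + (traceNorm (pt Xᴴ) + traceNorm (pt X))) := by
    rw [← traceNorm_submatrix (A := pt (gammaBit X)) (keyEquiv d), gamma_decomp X,
      traceNorm_real_smul (by norm_num : (0:ℝ) ≤ 1/2), traceNorm_fromBlocks_diag,
      traceNorm_fromBlocks_diag, traceNorm_fromBlocks_offdiag]
  have hXH : traceNorm (pt Xᴴ) = traceNorm (pt X) := by
    rw [pt_conjTranspose, traceNorm_conjTranspose]
  have hP1tr : P1.trace.re = traceNorm X := rfl
  have hP0tr : P0.trace.re = traceNorm X := by
    have hcongr : (Matrix.posSemidef_conjTranspose_mul_self Xᴴ).sqrt = P0 :=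
      sqrt_congr (by rw [Matrix.conjTranspose_conjTranspose]) _ _
    have h1 : traceNorm Xᴴ = P0.trace.re := by
      rw [traceNorm, hcongr]
    rw [← h1, traceNorm_conjTranspose]
  have hlow0 : traceNorm X ≤ traceNorm (pt P0) := by
    calc traceNorm X = (pt P0).trace.re := by rw [pt_trace, hP0tr]
      _ ≤ traceNorm (pt P0) :=
          retrace_le_traceNorm (pt_isHermitian
            (Matrix.posSemidef_self_mul_conjTranspose X).posSemidef_sqrt.1)
  have hlow1 : traceNorm X ≤ traceNorm (pt P1) := by
    calc traceNorm X = (pt P1).trace.re := by rw [pt_trace, hP1tr]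
      _ ≤ traceNorm (pt P1) :=
          retrace_le_traceNorm (pt_isHermitian
            (Matrix.posSemidef_conjTranspose_mul_self X).posSemidef_sqrt.1)
  have hmain : 1 + traceNorm (pt X) ≤ traceNorm (pt (gammaBit X)) := by
    rw [h0, hXH]
    rw [hX] at hlow0 hlow1
    linarith
  -- the shield-dimension bound
  have hfr : traceNorm X ≤ (d : ℝ) * traceNorm (pt X) := by
    have h1 := traceNorm_le_frob X
    have hcard : Real.sqrt (Fintype.card (dd d)) = (d : ℝ) := by
      have : (Fintype.card (dd d) : ℝ) = (d : ℝ) * (d : ℝ) := by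
        simp [Fintype.card_prod]
      rw [this, Real.sqrt_mul_self (by positivity)]
    have h2 : Real.sqrt ((Xᴴ * X).trace.re)
        = Real.sqrt (((pt X)ᴴ * pt X).trace.re) := by rw [pt_frob]
    have h3 := frob_le_traceNorm (pt X)
    calc traceNorm X ≤ Real.sqrt (Fintype.card (dd d)) * Real.sqrt ((Xᴴ * X).trace.re) := h1
      _ = (d : ℝ) * Real.sqrt (((pt X)ᴴ * pt X).trace.re) := by rw [hcard, h2]
      _ ≤ (d : ℝ) * traceNorm (pt X) := by
          exact mul_le_mul_of_nonneg_left h3 (by positivity)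
  have hdpos : (0 : ℝ) < d := by exact_mod_cast hd
  have hsge : 1 / (d : ℝ) ≤ traceNorm (pt X) := by
    rw [div_le_iff₀ hdpos]
    rw [hX] at hfr
    linarith [hfr]
  have hspos : 0 < traceNorm (pt X) := lt_of_lt_of_le (by positivity) hsge
  have htpos : 0 < traceNorm (pt (gammaBit X)) := by linarith
  have ht2 : traceNorm (pt (gammaBit X)) ≤ (2 : ℝ) ^ ε :=
    (Real.logb_le_iff_le_rpow (by norm_num) htpos).mp hEN
  have hfirst : traceNorm (pt X) ≤ (2 : ℝ) ^ ε - 1 := by linarith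
  refine ⟨hfirst, ?_⟩
  have hpow : 0 < (2 : ℝ) ^ ε - 1 := lt_of_lt_of_le hspos hfirst
  have : 1 / (d : ℝ) ≤ (2 : ℝ) ^ ε - 1 := le_trans hsge hfirst
  calc 1 / ((2:ℝ) ^ ε - 1) ≤ 1 / (1 / (d : ℝ)) :=
        one_div_le_one_div_of_le (by positivity) this
    _ = (d : ℝ) := one_div_one_div _
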